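/- arXiv:1412.0538 — 2 statements merged into one kernel-verified Lean document; each statement's English description precedes it below -/
import Mathlib

section
/- Let G = (V, E) be a finite connected graph with nonnegative edge weights and nonnegative vertex weights, with start vertex v_s, and let T be a minimum spanning tree of G (a spanning tree minimizing the total edge weight). Then the minimum agent count over all closed covering walks from v_s that use only edges of T is at most twice the minimum agent count over all covering walks from v_s in G. In particular, an optimal deployment strategy on the MST is a 2-approximation of the optimal deployment strategy on G. -/
/-! Strategic deployment: common definitions.

A walk is scanned with a state consisting of the set of already-visited
vertices, the number `curr` of currently available (non-settled) agents, and
the number `add` of additional agents (beyond `N = ∑ v, wV v`) recruited so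
far.  Crossing an edge `e` requires `curr ≥ wE e` (topping up `add`
otherwise); the first visit of a vertex `v` settles `wV v` agents there. -/

namespace Deploy

structure St (V : Type*) (α : Type*) where
  visited : Finset V
  curr : α
  add : α

variable {V : Type*} [DecidableEq V] {α : Type*} [AddCommMonoid α] [LinearOrder α] [IsOrderedAddMonoid α] [Sub α]

/-- Scan step for crossing an edge `e`. -/
def crossEdge (wE : Sym2 V → α) (e : Sym2 V) (s : St V α) : St V α :=
  if s.curr < wE e then ⟨s.visited, wE e, s.add + (wE e - s.curr)⟩ else s

/-- Scan step for visiting a vertex `v` (only first visits have an effect). -/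
def visitVtx (wV : V → α) (v : V) (s : St V α) : St V α :=
  if v ∈ s.visited then s
  else if s.curr < wV v then ⟨insert v s.visited, 0, s.add + (wV v - s.curr)⟩
  else ⟨insert v s.visited, s.curr - wV v, s.add⟩

variable {G : SimpleGraph V}

/-- Scanning a walk: alternately cross the next edge and visit the next vertex. -/
def scanWalk (wE : Sym2 V → α) (wV : V → α) : {u t : V} → G.Walk u t → St V α → St V α
  | _, _, .nil, s => s
  | u, _, .cons (v := v) _ p, s => scanWalk wE wV p (visitVtx wV v (crossEdge wE s(u, v) s))

/-- The agent count of a walk `p` starting at `vs`: the scan starts with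
`curr = N = ∑ v, wV v` and `add = 0`, first visiting the start vertex; the
agent count is `N` plus the final value of `add`. -/
def agentCount [Fintype V] (wE : Sym2 V → α) (wV : V → α) {vs t : V} (p : G.Walk vs t) : α :=
  (∑ v, wV v) + (scanWalk wE wV p (visitVtx wV vs ⟨∅, ∑ v, wV v, 0⟩)).add

/-- A walk is covering if every vertex of the graph appears on it. -/
def IsCovering {vs t : V} (p : G.Walk vs t) : Prop := ∀ v : V, v ∈ p.support

end Deploy

/-! A closed covering walk ends with every agent, original or recruited, either settled or still
walking, so its agent count is `N` plus the number still walking, which never exceeds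
`max N (heaviest edge used)`. Any covering walk of `G` needs at least `N` agents and at least `w f`
agents for each edge `f` it crosses. Removing an edge `e` of a minimum spanning tree `T` splits `T`
into two sides, both visited by a covering walk; the walk therefore crosses between them along an
edge `f` of `G`, and since `T - e + f` is again a spanning tree, `w e ≤ w f`. So a closed covering
walk of `T` costs at most `N + OPT ≤ 2 OPT`. -/

namespace Deploy
open SimpleGraph

variable {V α : Type*} {G : SimpleGraph V} {wE : Sym2 V → α} {wV : V → α} {N : α}

/-- Conservation of agents: those still walking plus those settled on visited vertices
are the initial `N` plus the recruited ones. -/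
def St.Balanced [AddCommMonoid α] (wV : V → α) (N : α) (s : St V α) : Prop :=
  s.curr + ∑ v ∈ s.visited, wV v = N + s.add

lemma St.Balanced.curr_le [AddCommMonoid α] [PartialOrder α] [CanonicallyOrderedAdd α]
    {s : St V α} (h : s.Balanced wV N) : s.curr ≤ N + s.add :=
  h ▸ le_self_add

section Visited

variable [AddCommMonoid α] [LinearOrder α] [Sub α]

lemma crossEdge_visited (s : St V α) (e : Sym2 V) : (crossEdge wE e s).visited = s.visited := by
  unfold crossEdge
  split_ifs <;> rfl

lemma le_crossEdge_curr (s : St V α) (e : Sym2 V) : wE e ≤ (crossEdge wE e s).curr := by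
  unfold crossEdge
  split_ifs with hlt
  exacts [le_rfl, not_lt.mp hlt]

lemma crossEdge_curr_le {M : α} {s : St V α} {e : Sym2 V} (hs : s.curr ≤ M) (he : wE e ≤ M) :
    (crossEdge wE e s).curr ≤ M := by
  unfold crossEdge
  split_ifs
  exacts [he, hs]

variable [DecidableEq V]

lemma visited_subset_visitVtx (s : St V α) (v : V) : s.visited ⊆ (visitVtx wV v s).visited := by
  unfold visitVtx
  split_ifs
  exacts [subset_rfl, Finset.subset_insert _ _, Finset.subset_insert _ _]

lemma mem_visitVtx_visited (s : St V α) (v : V) : v ∈ (visitVtx wV v s).visited := by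
  unfold visitVtx
  split_ifs with hv
  exacts [hv, Finset.mem_insert_self _ _, Finset.mem_insert_self _ _]

lemma visited_subset_scanWalk : ∀ {u t : V} (p : G.Walk u t) (s : St V α),
    s.visited ⊆ (scanWalk wE wV p s).visited
  | _, _, .nil, _ => subset_rfl
  | _, _, .cons _ p, s => by
    rw [← crossEdge_visited (wE := wE) s]
    exact (visited_subset_visitVtx _ _).trans (visited_subset_scanWalk p _)

lemma support_subset_scanWalk_visited : ∀ {u t : V} (p : G.Walk u t) {s : St V α},
    u ∈ s.visited → ∀ v ∈ p.support, v ∈ (scanWalk wE wV p s).visited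
  | _, _, .nil, _, hu, v, hv => by rwa [List.mem_singleton.mp hv]
  | _, _, .cons _ p, s, hu, v, hv => by
    rcases List.mem_cons.mp hv with rfl | hv
    · exact visited_subset_scanWalk (.cons _ p) s hu
    · exact support_subset_scanWalk_visited p (mem_visitVtx_visited _ _) v hv

end Visited

section Recruited

variable [AddCommMonoid α] [LinearOrder α] [Sub α] [CanonicallyOrderedAdd α]

lemma add_le_crossEdge_add (s : St V α) (e : Sym2 V) : s.add ≤ (crossEdge wE e s).add := by
  unfold crossEdge
  split_ifs
  exacts [le_self_add, le_rfl]

variable [DecidableEq V]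

lemma add_le_visitVtx_add (s : St V α) (v : V) : s.add ≤ (visitVtx wV v s).add := by
  unfold visitVtx
  split_ifs
  exacts [le_rfl, le_self_add, le_rfl]

lemma add_le_scanWalk_add : ∀ {u t : V} (p : G.Walk u t) (s : St V α),
    s.add ≤ (scanWalk wE wV p s).add
  | _, _, .nil, _ => le_rfl
  | _, _, .cons _ p, s => (add_le_crossEdge_add s _).trans <|
      (add_le_visitVtx_add _ _).trans (add_le_scanWalk_add p _)

lemma le_agentCount [Fintype V] {vs t : V} (p : G.Walk vs t) :
    ∑ v, wV v ≤ agentCount wE wV p :=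
  le_self_add

end Recruited

section Balance

variable [AddCommMonoid α] [LinearOrder α] [Sub α] [CanonicallyOrderedAdd α] [OrderedSub α]

lemma St.Balanced.crossEdge {s : St V α} (h : s.Balanced wV N) (e : Sym2 V) :
    (crossEdge wE e s).Balanced wV N := by
  unfold Deploy.crossEdge
  split_ifs with hlt
  · change wE e + _ = N + (s.add + (wE e - s.curr))
    rw [← add_assoc, ← h, add_right_comm, add_tsub_cancel_of_le hlt.le]
  · exact h

variable [DecidableEq V]

lemma St.Balanced.visitVtx {s : St V α} (h : s.Balanced wV N) (v : V) :
    (visitVtx wV v s).Balanced wV N := by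
  unfold Deploy.visitVtx
  split_ifs with hv hlt
  · exact h
  · change 0 + ∑ x ∈ insert v s.visited, wV x = N + (s.add + (wV v - s.curr))
    rw [zero_add, Finset.sum_insert hv, ← add_assoc, ← h, add_right_comm,
      add_tsub_cancel_of_le hlt.le]
  · change s.curr - wV v + ∑ x ∈ insert v s.visited, wV x = N + s.add
    rw [Finset.sum_insert hv, ← add_assoc, tsub_add_cancel_of_le (not_lt.mp hlt), h]

lemma St.Balanced.scanWalk :
    ∀ {u t : V} (p : G.Walk u t) {s : St V α}, s.Balanced wV N →
      (scanWalk wE wV p s).Balanced wV N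
  | _, _, .nil, _, h => h
  | _, _, .cons _ p, _, h => St.Balanced.scanWalk p ((h.crossEdge _).visitVtx _)

lemma visitVtx_curr_le (s : St V α) (v : V) : (visitVtx wV v s).curr ≤ s.curr := by
  unfold visitVtx
  split_ifs
  exacts [le_rfl, zero_le, tsub_le_self]

lemma scanWalk_curr_le {M : α} : ∀ {u t : V} (p : G.Walk u t) {s : St V α},
    s.curr ≤ M → (∀ f ∈ p.edges, wE f ≤ M) → (scanWalk wE wV p s).curr ≤ M
  | _, _, .nil, _, hs, _ => hs
  | _, _, .cons _ p, _, hs, hM => by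
    simp only [Walk.edges_cons, List.forall_mem_cons] at hM
    exact scanWalk_curr_le p ((visitVtx_curr_le _ _).trans (crossEdge_curr_le hs hM.1)) hM.2

lemma edge_le_scanWalk_add : ∀ {u t : V} (p : G.Walk u t) {s : St V α},
    s.Balanced wV N → ∀ f ∈ p.edges, wE f ≤ N + (scanWalk wE wV p s).add
  | _, _, .nil, _, _, f, hf => absurd hf List.not_mem_nil
  | u, _, .cons (v := v) _ p, s, h, f, hf => by
    rcases List.mem_cons.mp hf with rfl | hf
    · calc wE s(u, v) ≤ (crossEdge wE s(u, v) s).curr := le_crossEdge_curr s _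
        _ ≤ N + (crossEdge wE s(u, v) s).add := (h.crossEdge _).curr_le
        _ ≤ N + _ := add_le_add_right ((add_le_visitVtx_add _ _).trans (add_le_scanWalk_add p _)) N
    · exact edge_le_scanWalk_add p ((h.crossEdge _).visitVtx _) f hf

variable [Fintype V]

lemma balanced_start (vs : V) :
    (visitVtx wV vs ⟨∅, ∑ v, wV v, 0⟩).Balanced wV (∑ v, wV v) :=
  St.Balanced.visitVtx (by simp [St.Balanced]) vs

lemma edge_le_agentCount {vs t : V} {p : G.Walk vs t} {f : Sym2 V} (hf : f ∈ p.edges) :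
    wE f ≤ agentCount wE wV p :=
  edge_le_scanWalk_add p (balanced_start vs) f hf

lemma agentCount_le_of_isCovering {vs t : V} {p : G.Walk vs t} (hp : IsCovering p) {M : α}
    (hN : ∑ v, wV v ≤ M) (hM : ∀ f ∈ p.edges, wE f ≤ M) :
    agentCount wE wV p ≤ M + ∑ v, wV v := by
  set s := scanWalk wE wV p (visitVtx wV vs ⟨∅, ∑ v, wV v, 0⟩)
  have hvisited : s.visited = Finset.univ := Finset.eq_univ_of_forall fun v ↦
    support_subset_scanWalk_visited p (mem_visitVtx_visited _ vs) v (hp v)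
  have hbal : s.Balanced wV (∑ v, wV v) := (balanced_start vs).scanWalk p
  calc agentCount wE wV p = (∑ v, wV v) + s.add := rfl
    _ = s.curr + ∑ v, wV v := by rw [← hbal, hvisited]
    _ ≤ M + ∑ v, wV v :=
      add_le_add_left (scanWalk_curr_le p ((visitVtx_curr_le (⟨∅, _, 0⟩ : St V α) vs).trans hN) hM) _

end Balance

end Deploy

namespace SimpleGraph

variable {V : Type*} {G H : SimpleGraph V}

lemma Walk.reachable_deleteEdges_or {a b : V} : ∀ {v : V} (_ : G.Walk v a),
    (G.deleteEdges {s(a, b)}).Reachable v a ∨ (G.deleteEdges {s(a, b)}).Reachable v b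
  | _, .nil => .inl .rfl
  | v, .cons (v := w) hvw p => by
    by_cases he : s(v, w) = s(a, b)
    · rcases Sym2.eq_iff.mp he with ⟨rfl, -⟩ | ⟨rfl, -⟩
      exacts [.inl .rfl, .inr .rfl]
    · have hadj : (G.deleteEdges {s(a, b)}).Adj v w := by simp [hvw, he]
      exact p.reachable_deleteEdges_or.imp hadj.reachable.trans hadj.reachable.trans

lemma Walk.reachable_of_forall_mem_edges {u v : V} (p : G.Walk u v)
    (h : ∀ ⦃x y⦄, s(x, y) ∈ p.edges → H.Reachable x y) : ∀ w ∈ p.support, H.Reachable u w := by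
  induction p with
  | nil => simp
  | cons hadj p ih =>
    intro w hw
    rcases List.mem_cons.mp hw with rfl | hw
    · rfl
    · exact (h List.mem_cons_self).trans (ih (fun x y hxy ↦ h (List.mem_cons_of_mem _ hxy)) w hw)

lemma Preconnected.exists_walk_forall_mem_support [Finite V] (hG : G.Preconnected) (u : V) :
    ∃ p : G.Walk u u, ∀ v, v ∈ p.support := by
  have := Fintype.ofFinite V
  suffices ∀ s : Finset V, ∃ p : G.Walk u u, ∀ v ∈ s, v ∈ p.support by
    simpa using this Finset.univ
  intro s
  induction s using Finset.cons_induction with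
  | empty => exact ⟨.nil, by simp⟩
  | cons a s _ ih =>
    obtain ⟨p, hp⟩ := ih
    obtain ⟨w⟩ := hG u a
    refine ⟨(w.append w.reverse).append p, fun v hv ↦ ?_⟩
    rcases Finset.mem_cons.mp hv with rfl | hv
    · simp
    · simp [hp v hv]

section MinimumSpanningTree

variable [Fintype V] {α : Type*} [AddCommMonoid α] [PartialOrder α] [IsOrderedCancelAddMonoid α]

open scoped Classical in
def IsMinimumSpanningTree (G : SimpleGraph V) (w : Sym2 V → α) (T : SimpleGraph V) : Prop :=
  T ≤ G ∧ T.IsTree ∧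
    ∀ T' : SimpleGraph V, T' ≤ G → T'.IsTree → ∑ e ∈ T.edgeFinset, w e ≤ ∑ e ∈ T'.edgeFinset, w e

variable {w : Sym2 V → α} {T : SimpleGraph V}

/-- The exchange argument: swapping `s(a, b)` for `s(x, y)` yields another spanning tree. -/
lemma IsMinimumSpanningTree.le_of_not_reachable_deleteEdges (hT : G.IsMinimumSpanningTree w T)
    {a b x y : V} (hab : T.Adj a b) (hxy : G.Adj x y)
    (hnr : ¬ (T.deleteEdges {s(a, b)}).Reachable x y) : w s(a, b) ≤ w s(x, y) := by
  classical
  obtain ⟨hTG, hTtree, hmin⟩ := hT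
  set H := T.deleteEdges {s(a, b)}
  have hHT : H ≤ T := deleteEdges_le _
  have hside (v : V) : H.Reachable v a ∨ H.Reachable v b :=
    (hTtree.connected.preconnected v a).elim Walk.reachable_deleteEdges_or
  set T' := H ⊔ edge x y
  have hxy' : T'.Adj x y := Or.inr ((edge_adj ..).mpr ⟨.inl ⟨rfl, rfl⟩, hxy.ne⟩)
  have hT'ab : T'.Reachable a b := by
    have hHT' : H ≤ T' := le_sup_left
    rcases hside x with hx | hx <;> rcases hside y with hy | hy
    · exact absurd (hx.trans hy.symm) hnr
    · exact (hx.symm.mono hHT').trans (hxy'.reachable.trans (hy.mono hHT'))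
    · exact (hy.symm.mono hHT').trans (hxy'.symm.reachable.trans (hx.mono hHT'))
    · exact absurd (hx.trans hy.symm) hnr
  have hT'conn : T'.Connected := (connected_iff_exists_forall_reachable _).mpr ⟨a, fun v ↦
    (hside v).elim (fun h ↦ (h.mono le_sup_left).symm) fun h ↦ hT'ab.trans (h.mono le_sup_left).symm⟩
  have hT'acyc : T'.IsAcyclic := (hTtree.isAcyclic.anti hHT).sup_edge_of_not_reachable hnr
  have hT'G : T' ≤ G := sup_le (hHT.trans hTG) ((edge_le_iff G).mpr (.inr hxy))
  have hTsum : ∑ e ∈ T.edgeFinset, w e = w s(a, b) + ∑ e ∈ H.edgeFinset, w e := by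
    rw [← Finset.add_sum_erase _ _ (show s(a, b) ∈ T.edgeFinset from mem_edgeFinset.mpr hab)]
    congr 2
    ext e
    simp [H, and_comm]
  have hT'sum : ∑ e ∈ T'.edgeFinset, w e = w s(x, y) + ∑ e ∈ H.edgeFinset, w e := by
    rw [edgeFinset_sup_edge H (fun h ↦ hnr h.reachable) hxy.ne, Finset.sum_cons]
  have hle := hmin T' hT'G ⟨hT'conn, hT'acyc⟩
  rw [hTsum] at hle
  exact le_of_add_le_add_right (hle.trans_eq (by convert hT'sum))

lemma IsMinimumSpanningTree.exists_mem_edges_ge (hT : G.IsMinimumSpanningTree w T) {e : Sym2 V}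
    (he : e ∈ T.edgeSet) {u v : V} (q : G.Walk u v) (hq : ∀ x ∈ e, x ∈ q.support) :
    ∃ f ∈ q.edges, w e ≤ w f := by
  cases e with | h a b
  by_contra! hnot
  refine isAcyclic_iff_forall_adj_isBridge.mp hT.2.1.isAcyclic he ?_
  have hreach := q.reachable_of_forall_mem_edges (H := T.deleteEdges {s(a, b)})
    fun x y hxy ↦ by_contra fun hnr ↦
      hnot _ hxy (hT.le_of_not_reachable_deleteEdges he (q.adj_of_mem_edges hxy) hnr)
  exact (hreach a (hq a (Sym2.mem_mk_left a b))).symm.trans (hreach b (hq b (Sym2.mem_mk_right a b)))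

end MinimumSpanningTree

end SimpleGraph

open scoped Classical in
theorem mst_two_approximation_general
    {V : Type*} [Fintype V] [DecidableEq V] (G : SimpleGraph V)
    (wE : Sym2 V → NNReal) (wV : V → NNReal) (vs : V)
    (T : SimpleGraph V) (hTG : T ≤ G) (hT : T.IsTree)
    (hmin : ∀ T' : SimpleGraph V, T' ≤ G → T'.IsTree →
      ∑ e ∈ T.edgeFinset, wE e ≤ ∑ e ∈ T'.edgeFinset, wE e) :
    ∃ p : T.Walk vs vs, Deploy.IsCovering p ∧
      ∀ (t : V) (q : G.Walk vs t), Deploy.IsCovering q →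
        Deploy.agentCount wE wV p ≤ 2 * Deploy.agentCount wE wV q := by
  open Deploy in
  have hMST : G.IsMinimumSpanningTree wE T := ⟨hTG, hT, hmin⟩
  obtain ⟨p, hp⟩ := hT.connected.preconnected.exists_walk_forall_mem_support vs
  refine ⟨p, hp, fun t q hq ↦ ?_⟩
  have hedges (f : Sym2 V) (hf : f ∈ p.edges) : wE f ≤ agentCount wE wV q :=
    let ⟨g, hg, hfg⟩ := hMST.exists_mem_edges_ge (p.edges_subset_edgeSet hf) q fun x _ ↦ hq x
    hfg.trans (edge_le_agentCount hg)
  calc agentCount wE wV p ≤ agentCount wE wV q + ∑ v, wV v :=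
        agentCount_le_of_isCovering hp (le_agentCount q) hedges
    _ ≤ agentCount wE wV q + agentCount wE wV q := add_le_add_right (le_agentCount q) _
    _ = 2 * agentCount wE wV q := (two_mul _).symm

open scoped Classical in
/-- an optimal deployment strategy on a minimum spanning tree `T`
of a connected weighted graph `G` (all agents starting at `v_s`, returning to
`v_s` at the end) is a 2-approximation of the optimal deployment strategy on
`G` itself: there is a closed covering walk of `T` whose agent count is at
most twice the agent count of every covering walk of `G`. -/
theorem mst_two_approximation
    {V : Type*} [Fintype V] [DecidableEq V] (G : SimpleGraph V) (hG : G.Connected)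
    (wE : Sym2 V → NNReal) (wV : V → NNReal) (vs : V)
    (T : SimpleGraph V) (hTG : T ≤ G) (hT : T.IsTree)
    (hmin : ∀ T' : SimpleGraph V, T' ≤ G → T'.IsTree →
      ∑ e ∈ T.edgeFinset, wE e ≤ ∑ e ∈ T'.edgeFinset, wE e) :
    ∃ p : T.Walk vs vs, Deploy.IsCovering p ∧
      ∀ (t : V) (q : G.Walk vs t), Deploy.IsCovering q →
        Deploy.agentCount wE wV p ≤ 2 * Deploy.agentCount wE wV q :=
  mst_two_approximation_general G wE wV vs T hTG hT hmin
end

section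
/- Let G be a finite connected simple graph on at least two vertices with nonnegative real edge weights, and let T be a spanning tree of G of minimum total edge weight. Then T minimizes the bottleneck: for every spanning tree T' of G, the maximum edge weight occurring in T is at most the maximum edge weight occurring in T'. -/
/-!
If an edge `uv` of a minimum spanning tree `T` were heavier than every edge of another spanning
tree `T'`, then the path from `u` to `v` in `T'` crosses the cut that `uv` defines in `T` along
some edge `xy`. Exchanging `uv` for `xy` yields a spanning tree of smaller total weight.
-/

namespace SimpleGraph

variable {V : Type*} {G H : SimpleGraph V}

lemma Reachable.reachable_deleteEdges_or {a u : V} (v : V) (h : G.Reachable a u) :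
    (G.deleteEdges {s(u, v)}).Reachable a u ∨ (G.deleteEdges {s(u, v)}).Reachable a v := by
  classical
  obtain ⟨p, hp⟩ := h.exists_isPath
  by_cases huv : s(u, v) ∈ p.edges
  · have hv : v ∈ p.support := p.snd_mem_support_of_mem_edges huv
    have hu : u ∉ (p.takeUntil v hv).support :=
      Walk.endpoint_notMem_support_takeUntil hp hv (G.ne_of_adj (p.adj_of_mem_edges huv))
    exact Or.inr ⟨(p.takeUntil v hv).toDeleteEdge _
      fun h => hu (Walk.fst_mem_support_of_mem_edges _ h)⟩
  · exact Or.inl ⟨p.toDeleteEdge _ huv⟩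

lemma Reachable.exists_adj_of_not_reachable {u v : V} (h : G.Reachable u v)
    (huv : ¬H.Reachable u v) : ∃ x y, G.Adj x y ∧ H.Reachable u x ∧ ¬H.Reachable u y := by
  obtain ⟨d, -, hx, hy⟩ := h.some.exists_boundary_dart {a | H.Reachable u a} .rfl huv
  exact ⟨d.fst, d.snd, d.adj, hx, hy⟩

lemma IsTree.deleteEdges_sup_edge {T : SimpleGraph V} (hT : T.IsTree) {u v x y : V}
    (hx : (T.deleteEdges {s(u, v)}).Reachable u x)
    (hy : ¬(T.deleteEdges {s(u, v)}).Reachable u y) :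
    (T.deleteEdges {s(u, v)} ⊔ edge x y).IsTree := by
  set F := T.deleteEdges {s(u, v)}
  have hFT : F ≤ F ⊔ edge x y := le_sup_left
  have hyv : F.Reachable y v :=
    ((hT.connected.preconnected y u).reachable_deleteEdges_or v).resolve_left
      fun h => hy h.symm
  have hxy : (F ⊔ edge x y).Adj x y :=
    Or.inr <| (edge_adj ..).mpr ⟨Or.inl ⟨rfl, rfl⟩, by rintro rfl; exact hy hx⟩
  have hvu : (F ⊔ edge x y).Reachable v u :=
    ((hx.mono hFT).trans hxy.reachable |>.trans (hyv.mono hFT)).symm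
  refine ⟨(connected_iff_exists_forall_reachable _).mpr ⟨u, fun a => ?_⟩, ?_⟩
  · rcases (hT.connected.preconnected a u).reachable_deleteEdges_or v with h | h
    · exact (h.mono hFT).symm
    · exact ((h.mono hFT).trans hvu).symm
  · exact (hT.isAcyclic.anti (deleteEdges_le _)).sup_edge_of_not_reachable
      fun hxy => hy (hx.trans hxy)

lemma sum_edgeFinset_deleteEdges_sup_edge {M : Type*} [AddCommMonoid M] (w : Sym2 V → M)
    {T : SimpleGraph V} {u v x y : V} [Fintype T.edgeSet]
    [Fintype (T.deleteEdges {s(u, v)} ⊔ edge x y).edgeSet] (huv : T.Adj u v) (hxy : x ≠ y)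
    (hF : ¬(T.deleteEdges {s(u, v)}).Adj x y) :
    ∑ e ∈ (T.deleteEdges {s(u, v)} ⊔ edge x y).edgeFinset, w e + w s(u, v) =
      ∑ e ∈ T.edgeFinset, w e + w s(x, y) := by
  classical
  have hedges : (T.deleteEdges {s(u, v)} ⊔ edge x y).edgeFinset =
      insert s(x, y) (T.edgeFinset.erase s(u, v)) := by
    ext e
    simp [edgeSet_edge_of_ne hxy, and_comm]
  have hnotMem : s(x, y) ∉ T.edgeFinset.erase s(u, v) := by
    simpa [and_comm] using hF
  rw [hedges, Finset.sum_insert hnotMem,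
    ← Finset.add_sum_erase _ w (mem_edgeFinset.mpr (T.mem_edgeSet.mpr huv))]
  abel

end SimpleGraph

open SimpleGraph

open scoped Classical in
theorem mst_minimizes_bottleneck_general
    {V : Type*} [Fintype V] (G : SimpleGraph V)
    (wE : Sym2 V → NNReal)
    (T : SimpleGraph V) (hTG : T ≤ G) (hT : T.IsTree)
    (hmin : ∀ T' : SimpleGraph V, T' ≤ G → T'.IsTree →
      ∑ e ∈ T.edgeFinset, wE e ≤ ∑ e ∈ T'.edgeFinset, wE e) :
    ∀ T' : SimpleGraph V, T' ≤ G → T'.IsTree →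
      T.edgeFinset.sup wE ≤ T'.edgeFinset.sup wE := by
  intro T' hT'G hT'
  by_contra! hlt
  obtain ⟨⟨u, v⟩, he, hwe⟩ := Finset.lt_sup_iff.mp hlt
  have huv : T.Adj u v := mem_edgeFinset.mp he
  have hbridge : ¬(T.deleteEdges {s(u, v)}).Reachable u v :=
    isAcyclic_iff_forall_adj_isBridge.mp hT.isAcyclic huv
  obtain ⟨x, y, hxy, hx, hy⟩ :=
    (hT'.connected.preconnected u v).exists_adj_of_not_reachable hbridge
  have hT₂G : T.deleteEdges {s(u, v)} ⊔ edge x y ≤ G :=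
    sup_le ((deleteEdges_le _).trans hTG) ((edge_le_iff G).mpr (Or.inr (hT'G hxy)))
  have hw : wE s(x, y) < wE s(u, v) := (Finset.le_sup (mem_edgeFinset.mpr hxy)).trans_lt hwe
  have hexchange := sum_edgeFinset_deleteEdges_sup_edge wE huv hxy.ne
    fun h => hy (hx.trans h.reachable)
  have hlighter := add_lt_add_of_le_of_lt (hmin _ hT₂G (hT.deleteEdges_sup_edge hx hy)) hw
  -- `convert` bridges the two `Fintype` instances on the new tree's edge set.
  exact hlighter.ne (by convert hexchange.symm)

open scoped Classical in
/-- a minimum spanning tree of a finite connected simple graph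
`G` on at least two vertices (with nonnegative real edge weights) minimizes
the bottleneck: the maximum edge weight of a minimum spanning tree `T` is at
most the maximum edge weight of any spanning tree `T'`. -/
theorem mst_minimizes_bottleneck
    {V : Type*} [Fintype V] [DecidableEq V] (G : SimpleGraph V)
    (hcard : 1 < Fintype.card V) (hG : G.Connected)
    (wE : Sym2 V → NNReal)
    (T : SimpleGraph V) (hTG : T ≤ G) (hT : T.IsTree)
    (hmin : ∀ T' : SimpleGraph V, T' ≤ G → T'.IsTree →
      ∑ e ∈ T.edgeFinset, wE e ≤ ∑ e ∈ T'.edgeFinset, wE e) :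
    ∀ T' : SimpleGraph V, T' ≤ G → T'.IsTree →
      T.edgeFinset.sup wE ≤ T'.edgeFinset.sup wE :=
  mst_minimizes_bottleneck_general G wE T hTG hT hmin
end
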